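/- arXiv:2512.10247 — 2 statements merged into one kernel-verified Lean document; each statement's English description precedes it below -/
import Mathlib

section
/- Under the same Gaussian-filter setting, there exists an operator A⊥ with A⊥|ψ₀⟩ = 0 and ⟨ψ₀|A⊥ = 0 such that ‖Â_f − |ψ₀⟩⟨ψ₀| A |ψ₀⟩⟨ψ₀| − A⊥‖ ≤ e^{−Δ²/(2σ²)}. (Almost block-diagonality of the Gaussian-filtered operator.) -/
open Matrix Finset

noncomputable section

/-- The rank-one operator `|ψ i⟩⟨ψ i|`. -/
def ketbra {n : ℕ} (ψ : Fin n → Fin n → ℂ) (i : Fin n) : Matrix (Fin n) (Fin n) ℂ :=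
  Matrix.vecMulVec (ψ i) (star (ψ i))

/-- The set of Bohr frequencies `{E i - E j}` of the Hamiltonian. -/
def bohrSet {n : ℕ} (E : Fin n → ℝ) : Finset ℝ :=
  Finset.image (fun p : Fin n × Fin n => E p.1 - E p.2) Finset.univ

/-- The Bohr-frequency component `A_ν = ∑_{E i - E j = ν} |ψ i⟩⟨ψ i| A |ψ j⟩⟨ψ j|`. -/
def bohrComp {n : ℕ} (ψ : Fin n → Fin n → ℂ) (E : Fin n → ℝ)
    (A : Matrix (Fin n) (Fin n) ℂ) (ν : ℝ) : Matrix (Fin n) (Fin n) ℂ :=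
  ∑ i, ∑ j, if E i - E j = ν then ketbra ψ i * A * ketbra ψ j else 0

/-- The ℓ²→ℓ² operator norm of a matrix. -/
def opNorm {n : ℕ} (M : Matrix (Fin n) (Fin n) ℂ) : ℝ :=
  ‖Matrix.toEuclideanCLM (𝕜 := ℂ) M‖

/-- The Gaussian-filtered operator `Â_f = ∑_ν e^{-ν²/2σ²} A_ν`. -/
def gaussFiltered {n : ℕ} (ψ : Fin n → Fin n → ℂ) (E : Fin n → ℝ)
    (A : Matrix (Fin n) (Fin n) ℂ) (σ : ℝ) : Matrix (Fin n) (Fin n) ℂ :=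
  ∑ ν ∈ bohrSet E, (Real.exp (-(ν ^ 2) / (2 * σ ^ 2)) : ℂ) • bohrComp ψ E A ν
/-!
Write `P = |ψ₀⟩⟨ψ₀|` and `G = ∑_{j ≠ 0} e^{-(E_j - E_0)²/2σ²} |ψ_j⟩⟨ψ_j|`. Expanding
`Â_f = ∑_{i,j} e^{-(E_i - E_j)²/2σ²} |ψ_i⟩⟨ψ_i| A |ψ_j⟩⟨ψ_j|` according to whether `i` and `j`
are `0` gives `Â_f = PAP + (PAG + GAP) + A⊥`, where `A⊥` is the excited–excited block. Since
`PG = GP = 0`, the vectors `PAGx` and `GAPx` are orthogonal and `Gx = G(1 - P)x`, so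
`‖PAGx + GAPx‖² ≤ ‖A‖²‖G‖² (‖(1 - P)x‖² + ‖Px‖²) = ‖A‖²‖G‖²‖x‖²`: the two off-diagonal blocks
do not add up. Finally `G` is diagonal in the orthonormal basis `ψ`, and the gap bounds each of its
eigenvalues by `e^{-Δ²/2σ²}`.
-/

open scoped InnerProductSpace Matrix.Norms.L2Operator

theorem ContinuousLinearMap.norm_mul_mul_add_mul_mul_le {𝕜 E : Type*} [RCLike 𝕜]
    [NormedAddCommGroup E] [InnerProductSpace 𝕜 E] [CompleteSpace E] {P G : E →L[𝕜] E}
    (hP : IsStarProjection P) (hPG : P * G = 0) (hGP : G * P = 0) (A : E →L[𝕜] E) :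
    ‖P * A * G + G * A * P‖ ≤ ‖A‖ * ‖G‖ := by
  refine opNorm_le_bound _ (by positivity) fun x ↦ ?_
  have hsymm : ∀ u v, ⟪P u, v⟫_𝕜 = ⟪u, P v⟫_𝕜 := hP.isSelfAdjoint.isSymmetric
  have hPP : P (P x) = P x := congr($(hP.isIdempotentElem.eq) x)
  have hGx : G x = G (x - P x) := by
    rw [map_sub, ← mul_apply_eq_comp, hGP, _root_.zero_apply, sub_zero]
  have hx : ‖x‖ ^ 2 = ‖P x‖ ^ 2 + ‖x - P x‖ ^ 2 := by
    have := norm_add_sq_eq_norm_sq_add_norm_sq_of_inner_eq_zero (P x) (x - P x)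
      (by rw [hsymm, map_sub, hPP, sub_self, inner_zero_right])
    rw [add_sub_cancel] at this
    simpa only [sq] using this
  have hT : ‖(P * A * G + G * A * P) x‖ ^ 2 = ‖P (A (G x))‖ ^ 2 + ‖G (A (P x))‖ ^ 2 := by
    have := norm_add_sq_eq_norm_sq_add_norm_sq_of_inner_eq_zero (P (A (G x))) (G (A (P x)))
      (by rw [hsymm, ← mul_apply_eq_comp P G, hPG, _root_.zero_apply, inner_zero_right])
    simpa only [sq, _root_.add_apply, mul_apply_eq_comp] using this
  have h₁ : ‖P (A (G x))‖ ≤ ‖A‖ * ‖G‖ * ‖x - P x‖ :=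
    calc ‖P (A (G x))‖ ≤ ‖P‖ * ‖A (G x)‖ := P.le_opNorm _
      _ ≤ 1 * (‖A‖ * (‖G‖ * ‖x - P x‖)) := by
        rw [hGx]
        gcongr
        exacts [hP.norm_le, A.le_opNorm_of_le (G.le_opNorm _)]
      _ = ‖A‖ * ‖G‖ * ‖x - P x‖ := by ring
  have h₂ : ‖G (A (P x))‖ ≤ ‖A‖ * ‖G‖ * ‖P x‖ :=
    calc ‖G (A (P x))‖ ≤ ‖G‖ * (‖A‖ * ‖P x‖) := G.le_opNorm_of_le (A.le_opNorm _)
      _ = ‖A‖ * ‖G‖ * ‖P x‖ := by ring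
  refine (pow_le_pow_iff_left₀ (norm_nonneg _) (by positivity) two_ne_zero).1 ?_
  rw [hT, mul_pow, hx]
  nlinarith [pow_le_pow_left₀ (norm_nonneg _) h₁ 2, pow_le_pow_left₀ (norm_nonneg _) h₂ 2]

theorem Matrix.l2_opNorm_mul_mul_add_mul_mul_le {𝕜 ι : Type*} [RCLike 𝕜] [Fintype ι]
    [DecidableEq ι] {P G : Matrix ι ι 𝕜} (hP : IsStarProjection P) (hPG : P * G = 0)
    (hGP : G * P = 0) (A : Matrix ι ι 𝕜) :
    ‖P * A * G + G * A * P‖ ≤ ‖A‖ * ‖G‖ := by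
  simpa only [cstar_norm_def, map_add, map_mul] using
    ContinuousLinearMap.norm_mul_mul_add_mul_mul_le (hP.map (toEuclideanCLM (n := ι) (𝕜 := 𝕜)))
      (by rw [← map_mul, hPG, map_zero]) (by rw [← map_mul, hGP, map_zero])
      (toEuclideanCLM (n := ι) (𝕜 := 𝕜) A)

def ketbraSandwich {n : ℕ} (ψ : Fin n → Fin n → ℂ) (A : Matrix (Fin n) (Fin n) ℂ)
    (c : Fin n → Fin n → ℂ) : Matrix (Fin n) (Fin n) ℂ :=
  ∑ i, ∑ j, c i j • (ketbra ψ i * A * ketbra ψ j)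

section Ketbra

variable {n : ℕ} {ψ : Fin n → Fin n → ℂ}

lemma sum_smul_ketbra_eq_mul_diagonal_mul (c : Fin n → ℂ) :
    ∑ j, c j • ketbra ψ j = (of ψ)ᵀ * diagonal c * ((of ψ)ᵀ)ᴴ := by
  ext a b
  simp only [Matrix.sum_apply, Matrix.smul_apply, ketbra, vecMulVec_apply, mul_apply,
    diagonal_apply, transpose_apply, conjTranspose_apply, of_apply, mul_ite, mul_zero,
    Finset.sum_ite_eq', Finset.mem_univ, if_true]
  exact Finset.sum_congr rfl fun j _ ↦ by simp only [smul_eq_mul, Pi.star_apply]; ring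

variable {A : Matrix (Fin n) (Fin n) ℂ}

lemma ketbraSandwich_add (c c' : Fin n → Fin n → ℂ) :
    ketbraSandwich ψ A (c + c') = ketbraSandwich ψ A c + ketbraSandwich ψ A c' := by
  simp [ketbraSandwich, add_smul, Finset.sum_add_distrib]

lemma ketbraSandwich_mul (a b : Fin n → ℂ) :
    ketbraSandwich ψ A (fun i j ↦ a i * b j)
      = (∑ i, a i • ketbra ψ i) * A * ∑ j, b j • ketbra ψ j := by
  rw [ketbraSandwich, Finset.sum_mul, Finset.sum_mul_sum]
  simp only [smul_mul_assoc, mul_smul_comm, smul_smul, mul_comm (b _) (a _)]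

variable (hψ : ∀ i j, star (ψ i) ⬝ᵥ ψ j = if i = j then (1 : ℂ) else 0)
include hψ

lemma ketbra_mul_ketbra (i j : Fin n) :
    ketbra ψ i * ketbra ψ j = if i = j then ketbra ψ i else 0 := by
  rw [ketbra, ketbra, vecMulVec_mul_vecMulVec, hψ]
  split_ifs with h <;> simp [h]

lemma isStarProjection_ketbra (i : Fin n) : IsStarProjection (ketbra ψ i) where
  isIdempotentElem := (ketbra_mul_ketbra hψ i i).trans (if_pos rfl)
  isSelfAdjoint := by
    rw [IsSelfAdjoint, ketbra, star_eq_conjTranspose, conjTranspose_vecMulVec, star_star]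

lemma ketbra_mulVec_self (i : Fin n) : ketbra ψ i *ᵥ ψ i = ψ i := by
  simp [ketbra, vecMulVec_mulVec, hψ]

lemma vecMul_ketbra_self (i : Fin n) : star (ψ i) ᵥ* ketbra ψ i = star (ψ i) := by
  simp [ketbra, vecMul_vecMulVec, hψ]

lemma ketbra_mul_sum_smul_ketbra (c : Fin n → ℂ) (k : Fin n) :
    ketbra ψ k * ∑ j, c j • ketbra ψ j = c k • ketbra ψ k := by
  simp [Finset.mul_sum, ketbra_mul_ketbra hψ]

lemma sum_smul_ketbra_mul_ketbra (c : Fin n → ℂ) (k : Fin n) :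
    (∑ j, c j • ketbra ψ j) * ketbra ψ k = c k • ketbra ψ k := by
  simp [Finset.sum_mul, ketbra_mul_ketbra hψ]

lemma transpose_of_mem_unitaryGroup : (of ψ)ᵀ ∈ unitaryGroup (Fin n) ℂ := by
  rw [mem_unitaryGroup_iff']
  ext i j
  simpa [mul_apply, dotProduct, one_apply] using hψ i j

lemma norm_sum_smul_ketbra (c : Fin n → ℂ) : ‖∑ j, c j • ketbra ψ j‖ = ‖c‖ := by
  have hU := transpose_of_mem_unitaryGroup hψ
  rw [sum_smul_ketbra_eq_mul_diagonal_mul, ← star_eq_conjTranspose,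
    CStarRing.norm_mul_mem_unitary _ (Unitary.star_mem hU), CStarRing.norm_mem_unitary_mul _ hU,
    l2_opNorm_diagonal]

lemma ketbraSandwich_mul_ketbra_eq_zero {c : Fin n → Fin n → ℂ} {k : Fin n}
    (hc : ∀ i, c i k = 0) : ketbraSandwich ψ A c * ketbra ψ k = 0 := by
  simp [ketbraSandwich, Finset.sum_mul, Matrix.mul_assoc, ketbra_mul_ketbra hψ, hc]

lemma ketbra_mul_ketbraSandwich_eq_zero {c : Fin n → Fin n → ℂ} {k : Fin n}
    (hc : ∀ j, c k j = 0) : ketbra ψ k * ketbraSandwich ψ A c = 0 := by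
  simp [ketbraSandwich, Finset.mul_sum, ← Matrix.mul_assoc, ketbra_mul_ketbra hψ, hc]

lemma ketbraSandwich_mulVec_eq_zero {c : Fin n → Fin n → ℂ} {k : Fin n}
    (hc : ∀ i, c i k = 0) : ketbraSandwich ψ A c *ᵥ ψ k = 0 := by
  rw [← ketbra_mulVec_self hψ k, mulVec_mulVec, ketbraSandwich_mul_ketbra_eq_zero hψ hc,
    zero_mulVec]

lemma vecMul_ketbraSandwich_eq_zero {c : Fin n → Fin n → ℂ} {k : Fin n}
    (hc : ∀ j, c k j = 0) : star (ψ k) ᵥ* ketbraSandwich ψ A c = 0 := by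
  rw [← vecMul_ketbra_self hψ k, vecMul_vecMul, ketbra_mul_ketbraSandwich_eq_zero hψ hc,
    vecMul_zero]

end Ketbra
def gaussWeight (σ ν : ℝ) : ℝ :=
  Real.exp (-(ν ^ 2) / (2 * σ ^ 2))

lemma gaussWeight_pos (σ ν : ℝ) : 0 < gaussWeight σ ν :=
  Real.exp_pos _

lemma gaussWeight_zero (σ : ℝ) : gaussWeight σ 0 = 1 := by
  simp [gaussWeight]

lemma gaussWeight_neg (σ ν : ℝ) : gaussWeight σ (-ν) = gaussWeight σ ν := by
  simp [gaussWeight]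

lemma gaussWeight_le_of_le_abs {σ ν Δ : ℝ} (hΔ : 0 ≤ Δ) (h : Δ ≤ |ν|) :
    gaussWeight σ ν ≤ gaussWeight σ Δ := by
  refine Real.exp_le_exp.2 (div_le_div_of_nonneg_right ?_ (by positivity))
  rw [neg_le_neg_iff, ← sq_abs ν]
  exact pow_le_pow_left₀ hΔ h 2

lemma gaussFiltered_eq_ketbraSandwich {n : ℕ} (ψ : Fin n → Fin n → ℂ) (E : Fin n → ℝ)
    (A : Matrix (Fin n) (Fin n) ℂ) (σ : ℝ) :
    gaussFiltered ψ E A σ = ketbraSandwich ψ A fun i j ↦ (gaussWeight σ (E i - E j) : ℂ) := by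
  unfold gaussFiltered bohrComp ketbraSandwich
  simp only [Finset.smul_sum, smul_ite, smul_zero]
  rw [Finset.sum_comm]
  refine Finset.sum_congr rfl fun i _ ↦ ?_
  rw [Finset.sum_comm]
  refine Finset.sum_congr rfl fun j _ ↦ ?_
  rw [Finset.sum_ite_eq (bohrSet E) (E i - E j)]
  simp [bohrSet, gaussWeight]

section GroundState

variable {d : ℕ} (ψ : Fin (d + 1) → Fin (d + 1) → ℂ) (E : Fin (d + 1) → ℝ)
  (A : Matrix (Fin (d + 1)) (Fin (d + 1)) ℂ) (σ : ℝ)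

def excitedGaussFilter : Matrix (Fin (d + 1)) (Fin (d + 1)) ℂ :=
  ∑ j, (if j = 0 then 0 else (gaussWeight σ (E j - E 0) : ℂ)) • ketbra ψ j

def excitedBlock : Matrix (Fin (d + 1)) (Fin (d + 1)) ℂ :=
  ketbraSandwich ψ A fun i j ↦ if i = 0 ∨ j = 0 then 0 else (gaussWeight σ (E i - E j) : ℂ)

lemma gaussFiltered_eq_add :
    gaussFiltered ψ E A σ = ketbra ψ 0 * A * ketbra ψ 0
      + (ketbra ψ 0 * A * excitedGaussFilter ψ E σ + excitedGaussFilter ψ E σ * A * ketbra ψ 0)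
      + excitedBlock ψ E A σ := by
  set δ : Fin (d + 1) → ℂ := fun i ↦ if i = 0 then 1 else 0
  set g : Fin (d + 1) → ℂ := fun j ↦ if j = 0 then 0 else (gaussWeight σ (E j - E 0) : ℂ)
  have hδ : ∑ i, δ i • ketbra ψ i = ketbra ψ 0 := by simp [δ]
  have hweights : (fun i j ↦ (gaussWeight σ (E i - E j) : ℂ))
      = (fun i j ↦ δ i * δ j) + ((fun i j ↦ δ i * g j) + (fun i j ↦ g i * δ j))
        + fun i j ↦ if i = 0 ∨ j = 0 then 0 else (gaussWeight σ (E i - E j) : ℂ) := by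
    ext i j
    by_cases hi : i = 0 <;> by_cases hj : j = 0 <;>
      simp [δ, g, hi, hj, gaussWeight_zero, ← gaussWeight_neg σ (E 0 - E j)]
  rw [gaussFiltered_eq_ketbraSandwich, hweights, ketbraSandwich_add, ketbraSandwich_add,
    ketbraSandwich_add, ketbraSandwich_mul, ketbraSandwich_mul, ketbraSandwich_mul, hδ]
  rfl

variable {ψ E σ} (hψ : ∀ i j, star (ψ i) ⬝ᵥ ψ j = if i = j then (1 : ℂ) else 0)
include hψ

lemma ketbra_mul_excitedGaussFilter : ketbra ψ 0 * excitedGaussFilter ψ E σ = 0 := by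
  rw [excitedGaussFilter, ketbra_mul_sum_smul_ketbra hψ, if_pos rfl, zero_smul]

lemma excitedGaussFilter_mul_ketbra : excitedGaussFilter ψ E σ * ketbra ψ 0 = 0 := by
  rw [excitedGaussFilter, sum_smul_ketbra_mul_ketbra hψ, if_pos rfl, zero_smul]

lemma norm_excitedGaussFilter_le {Δ : ℝ} (hgap : ∀ i : Fin (d + 1), i ≠ 0 → E 0 + Δ ≤ E i)
    (hΔ : 0 ≤ Δ) : ‖excitedGaussFilter ψ E σ‖ ≤ gaussWeight σ Δ := by
  rw [excitedGaussFilter, norm_sum_smul_ketbra hψ,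
    pi_norm_le_iff_of_nonneg (gaussWeight_pos σ Δ).le]
  intro j
  split_ifs with hj
  · simpa using (gaussWeight_pos σ Δ).le
  · rw [Complex.norm_real, Real.norm_of_nonneg (gaussWeight_pos _ _).le]
    exact gaussWeight_le_of_le_abs hΔ (le_abs.2 (Or.inl (by linarith [hgap j hj])))

end GroundState

theorem gauss_filtered_almost_block_diagonal_general {d : ℕ} (ψ : Fin (d + 1) → Fin (d + 1) → ℂ)
    (E : Fin (d + 1) → ℝ) (A : Matrix (Fin (d + 1)) (Fin (d + 1)) ℂ) (Δ σ : ℝ)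
    (horth : ∀ i j, star (ψ i) ⬝ᵥ ψ j = if i = j then (1 : ℂ) else 0)
    (hgap : ∀ i : Fin (d + 1), i ≠ 0 → E 0 + Δ ≤ E i)
    (hΔ : 0 < Δ) (hAnorm : opNorm A ≤ 1) :
    ∃ Aperp : Matrix (Fin (d + 1)) (Fin (d + 1)) ℂ,
      Aperp.mulVec (ψ 0) = 0 ∧
      Matrix.vecMul (star (ψ 0)) Aperp = 0 ∧
      opNorm (gaussFiltered ψ E A σ - ketbra ψ 0 * A * ketbra ψ 0 - Aperp)
        ≤ Real.exp (-(Δ ^ 2) / (2 * σ ^ 2)) := by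
  set P := ketbra ψ 0
  set G := excitedGaussFilter ψ E σ
  have herror :
      gaussFiltered ψ E A σ - P * A * P - excitedBlock ψ E A σ = P * A * G + G * A * P := by
    rw [gaussFiltered_eq_add]
    abel
  refine ⟨excitedBlock ψ E A σ, ketbraSandwich_mulVec_eq_zero horth (by simp),
    vecMul_ketbraSandwich_eq_zero horth (by simp), ?_⟩
  calc opNorm (gaussFiltered ψ E A σ - P * A * P - excitedBlock ψ E A σ)
      = ‖P * A * G + G * A * P‖ := congrArg opNorm herror
    _ ≤ ‖A‖ * ‖G‖ := l2_opNorm_mul_mul_add_mul_mul_le (isStarProjection_ketbra horth 0)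
        (ketbra_mul_excitedGaussFilter horth) (excitedGaussFilter_mul_ketbra horth) A
    _ ≤ 1 * gaussWeight σ Δ := by
      gcongr
      exacts [hAnorm, norm_excitedGaussFilter_le horth hgap hΔ.le]
    _ = Real.exp (-(Δ ^ 2) / (2 * σ ^ 2)) := one_mul _

/-- almost block-diagonality of the Gaussian-filtered operator:
`Â_f ≈ |ψ₀⟩⟨ψ₀| A |ψ₀⟩⟨ψ₀| + A⊥` with `A⊥|ψ₀⟩ = 0`, `⟨ψ₀|A⊥ = 0`,
up to error `e^{−Δ²/(2σ²)}` in operator norm. -/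
theorem gauss_filtered_almost_block_diagonal {d : ℕ} (ψ : Fin (d + 1) → Fin (d + 1) → ℂ)
    (E : Fin (d + 1) → ℝ) (H A : Matrix (Fin (d + 1)) (Fin (d + 1)) ℂ) (Δ σ : ℝ)
    (horth : ∀ i j, star (ψ i) ⬝ᵥ ψ j = if i = j then (1 : ℂ) else 0)
    (hcomplete : ∑ i, ketbra ψ i = 1)
    (hH : H = ∑ i, (E i : ℂ) • ketbra ψ i)
    (hgap : ∀ i : Fin (d + 1), i ≠ 0 → E 0 + Δ ≤ E i)
    (hΔ : 0 < Δ) (hσ : 0 < σ)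
    (hA : A.IsHermitian) (hAnorm : opNorm A ≤ 1) :
    ∃ Aperp : Matrix (Fin (d + 1)) (Fin (d + 1)) ℂ,
      Aperp.mulVec (ψ 0) = 0 ∧
      Matrix.vecMul (star (ψ 0)) Aperp = 0 ∧
      opNorm (gaussFiltered ψ E A σ - ketbra ψ 0 * A * ketbra ψ 0 - Aperp)
        ≤ Real.exp (-(Δ ^ 2) / (2 * σ ^ 2)) :=
  gauss_filtered_almost_block_diagonal_general ψ E A Δ σ horth hgap hΔ hAnorm

end
end

section
/- (Quasi-local filtering implies decay of correlation.) Let H be Hermitian with unique ground state |ψ₀⟩ and spectral gap ≥ Δ. Let A, B be Hermitian with ‖A‖, ‖B‖ ≤ 1 and [A,B] = 0. Let f be a filter with f̂(−ν) = 0 for all Bohr frequencies ν ≥ Δ and f̂(−ν) = 1 for all Bohr frequencies ν ≤ 0. If ‖[B, Â_f]‖ ≤ η, then |⟨ψ₀| B A |ψ₀⟩ − ⟨ψ₀|B|ψ₀⟩⟨ψ₀|A|ψ₀⟩| ≤ η. -/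
/-! Every Bohr frequency `E i - E 0` out of the ground state with `i ≠ 0` is at least `Δ`, and
every `E 0 - E j` is at most `0`. So the filter kills all components of `Â_f ψ₀` except the
ground-state one, giving `Â_f ψ₀ = ⟨A⟩ ψ₀`, and leaves `ψ₀† Â_f = ψ₀† A` untouched (by
completeness of the eigenbasis). With `[A, B] = 0` this turns `⟨ψ₀|[B, Â_f]|ψ₀⟩` into
`⟨B⟩⟨A⟩ - ⟨BA⟩`, and an expectation in a unit vector is bounded by the operator norm. -/

open Matrix Finset

noncomputable section

/-- The filtered operator `Â_f = ∑_ν f̂(−ν) A_ν`, specified via the Fourier transform `f̂`. -/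
def sumFiltered {n : ℕ} (ψ : Fin n → Fin n → ℂ) (E : Fin n → ℝ)
    (A : Matrix (Fin n) (Fin n) ℂ) (fhat : ℝ → ℂ) : Matrix (Fin n) (Fin n) ℂ :=
  ∑ ν ∈ bohrSet E, fhat (-ν) • bohrComp ψ E A ν

section

variable {n : ℕ}

lemma ketbra_mulVec (ψ : Fin n → Fin n → ℂ) (i : Fin n) (x : Fin n → ℂ) :
    ketbra ψ i *ᵥ x = (star (ψ i) ⬝ᵥ x) • ψ i := by
  rw [ketbra, vecMulVec_mulVec, op_smul_eq_smul]

lemma vecMul_ketbra (ψ : Fin n → Fin n → ℂ) (i : Fin n) (x : Fin n → ℂ) :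
    x ᵥ* ketbra ψ i = (x ⬝ᵥ ψ i) • star (ψ i) :=
  vecMul_vecMulVec _ _ _

lemma mem_bohrSet (E : Fin n → ℝ) (i j : Fin n) : E i - E j ∈ bohrSet E :=
  Finset.mem_image.2 ⟨(i, j), Finset.mem_univ _, rfl⟩

lemma sumFiltered_eq_sum_sum (ψ : Fin n → Fin n → ℂ) (E : Fin n → ℝ)
    (A : Matrix (Fin n) (Fin n) ℂ) (fhat : ℝ → ℂ) :
    sumFiltered ψ E A fhat
      = ∑ i, ∑ j, fhat (-(E i - E j)) • (ketbra ψ i * A * ketbra ψ j) := by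
  simp only [sumFiltered, bohrComp, Finset.smul_sum, smul_ite, smul_zero]
  rw [Finset.sum_comm]
  refine Finset.sum_congr rfl fun i _ => ?_
  rw [Finset.sum_comm]
  refine Finset.sum_congr rfl fun j _ => ?_
  rw [Finset.sum_ite_eq, if_pos (mem_bohrSet E i j)]

end

section Orthonormal

variable {n : ℕ} {ψ : Fin n → Fin n → ℂ} (E : Fin n → ℝ) (A : Matrix (Fin n) (Fin n) ℂ)
  (fhat : ℝ → ℂ)

lemma sumFiltered_mulVec (horth : ∀ i j, star (ψ i) ⬝ᵥ ψ j = if i = j then (1 : ℂ) else 0)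
    (k : Fin n) :
    sumFiltered ψ E A fhat *ᵥ ψ k
      = ∑ i, (fhat (-(E i - E k)) * (star (ψ i) ⬝ᵥ A *ᵥ ψ k)) • ψ i := by
  rw [sumFiltered_eq_sum_sum, sum_mulVec]
  refine Finset.sum_congr rfl fun i _ => ?_
  rw [sum_mulVec, Finset.sum_eq_single k]
  · rw [smul_mulVec, ← mulVec_mulVec, ketbra_mulVec, horth, if_pos rfl, one_smul,
      ← mulVec_mulVec, ketbra_mulVec, mul_smul]
  · intro j _ hj
    rw [smul_mulVec, ← mulVec_mulVec, ketbra_mulVec, horth, if_neg hj, zero_smul, mulVec_zero,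
      smul_zero]
  · simp

lemma star_vecMul_sumFiltered
    (horth : ∀ i j, star (ψ i) ⬝ᵥ ψ j = if i = j then (1 : ℂ) else 0) (k : Fin n) :
    star (ψ k) ᵥ* sumFiltered ψ E A fhat
      = ∑ j, fhat (-(E k - E j)) • (star (ψ k) ᵥ* A ᵥ* ketbra ψ j) := by
  rw [sumFiltered_eq_sum_sum, vecMul_sum, Finset.sum_eq_single k]
  · rw [vecMul_sum]
    refine Finset.sum_congr rfl fun j _ => ?_
    rw [vecMul_smul, ← vecMul_vecMul, ← vecMul_vecMul, vecMul_ketbra ψ k, horth, if_pos rfl,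
      one_smul]
  · intro i _ hi
    refine (vecMul_sum _ _ _).trans (Finset.sum_eq_zero fun j _ => ?_)
    rw [vecMul_smul, ← vecMul_vecMul, ← vecMul_vecMul, vecMul_ketbra ψ i, horth,
      if_neg (Ne.symm hi), zero_smul, zero_vecMul, zero_vecMul, smul_zero]
  · simp

end Orthonormal

section GroundState

variable {n : ℕ} {ψ : Fin n → Fin n → ℂ} {E : Fin n → ℝ} {A : Matrix (Fin n) (Fin n) ℂ}
  {fhat : ℝ → ℂ} {Δ : ℝ} {g : Fin n}

lemma fhat_eq_zero_of_ne_ground (hgap : ∀ i, i ≠ g → E g + Δ ≤ E i)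
    (hfhi : ∀ ν ∈ bohrSet E, Δ ≤ ν → fhat (-ν) = 0) {i : Fin n} (hi : i ≠ g) :
    fhat (-(E i - E g)) = 0 :=
  hfhi _ (mem_bohrSet E i g) (by linarith [hgap i hi])

lemma fhat_eq_one_from_ground (hΔ : 0 ≤ Δ) (hgap : ∀ i, i ≠ g → E g + Δ ≤ E i)
    (hflo : ∀ ν ∈ bohrSet E, ν ≤ 0 → fhat (-ν) = 1) (j : Fin n) :
    fhat (-(E g - E j)) = 1 := by
  refine hflo _ (mem_bohrSet E g j) ?_
  obtain rfl | hj := eq_or_ne j g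
  · rw [sub_self]
  · linarith [hgap j hj]

lemma sumFiltered_mulVec_ground
    (horth : ∀ i j, star (ψ i) ⬝ᵥ ψ j = if i = j then (1 : ℂ) else 0)
    (hgap : ∀ i, i ≠ g → E g + Δ ≤ E i) (hΔ : 0 ≤ Δ)
    (hflo : ∀ ν ∈ bohrSet E, ν ≤ 0 → fhat (-ν) = 1)
    (hfhi : ∀ ν ∈ bohrSet E, Δ ≤ ν → fhat (-ν) = 0) :
    sumFiltered ψ E A fhat *ᵥ ψ g = (star (ψ g) ⬝ᵥ A *ᵥ ψ g) • ψ g := by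
  rw [sumFiltered_mulVec E A fhat horth, Finset.sum_eq_single g]
  · rw [fhat_eq_one_from_ground hΔ hgap hflo, one_mul]
  · intro i _ hi
    rw [fhat_eq_zero_of_ne_ground hgap hfhi hi, zero_mul, zero_smul]
  · simp

lemma star_vecMul_sumFiltered_ground
    (horth : ∀ i j, star (ψ i) ⬝ᵥ ψ j = if i = j then (1 : ℂ) else 0)
    (hgap : ∀ i, i ≠ g → E g + Δ ≤ E i) (hΔ : 0 ≤ Δ)
    (hflo : ∀ ν ∈ bohrSet E, ν ≤ 0 → fhat (-ν) = 1) (hcomplete : ∑ i, ketbra ψ i = 1) :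
    star (ψ g) ᵥ* sumFiltered ψ E A fhat = star (ψ g) ᵥ* A := by
  simp_rw [star_vecMul_sumFiltered E A fhat horth, fhat_eq_one_from_ground hΔ hgap hflo,
    one_smul]
  rw [← vecMul_sum, hcomplete, vecMul_one]

end GroundState

lemma dotProduct_commutator_mulVec {R m : Type*} [CommRing R] [Fintype m]
    {A B F : Matrix m m R} {v w : m → R} {a : R} (hv : F *ᵥ v = a • v)
    (hw : w ᵥ* F = w ᵥ* A) (hAB : A * B = B * A) :
    w ⬝ᵥ (B * F - F * B) *ᵥ v = (w ⬝ᵥ B *ᵥ v) * a - w ⬝ᵥ (B * A) *ᵥ v := by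
  have hBF : w ⬝ᵥ (B * F) *ᵥ v = (w ⬝ᵥ B *ᵥ v) * a := by
    rw [← mulVec_mulVec, hv, mulVec_smul, dotProduct_smul, smul_eq_mul, mul_comm]
  have hFB : w ⬝ᵥ (F * B) *ᵥ v = w ⬝ᵥ (B * A) *ᵥ v := by
    rw [dotProduct_mulVec, ← vecMul_vecMul, hw, vecMul_vecMul, ← hAB, ← dotProduct_mulVec]
  rw [sub_mulVec, dotProduct_sub, hBF, hFB]

lemma norm_star_dotProduct_mulVec_le_opNorm {n : ℕ} (M : Matrix (Fin n) (Fin n) ℂ)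
    {v : Fin n → ℂ} (hv : star v ⬝ᵥ v = 1) : ‖star v ⬝ᵥ M *ᵥ v‖ ≤ opNorm M := by
  set x : EuclideanSpace ℂ (Fin n) := WithLp.toLp 2 v
  have hx : ‖x‖ = 1 := by
    have h : ‖x‖ ^ 2 = 1 := by
      rw [@norm_sq_eq_re_inner ℂ, EuclideanSpace.inner_toLp_toLp, dotProduct_comm, hv,
        RCLike.one_re]
    exact (pow_eq_one_iff_of_nonneg (norm_nonneg x) two_ne_zero).1 h
  calc ‖star v ⬝ᵥ M *ᵥ v‖
      = ‖inner ℂ x (Matrix.toEuclideanCLM (𝕜 := ℂ) M x)‖ := by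
        rw [toEuclideanCLM_toLp, EuclideanSpace.inner_toLp_toLp, dotProduct_comm]
    _ ≤ ‖x‖ * ‖Matrix.toEuclideanCLM (𝕜 := ℂ) M x‖ := norm_inner_le_norm _ _
    _ ≤ opNorm M := by
        simpa [hx, opNorm] using (Matrix.toEuclideanCLM (𝕜 := ℂ) M).le_opNorm x

theorem quasilocal_filter_correlation_decay_general {d : ℕ} (ψ : Fin (d + 1) → Fin (d + 1) → ℂ)
    (E : Fin (d + 1) → ℝ) (A B : Matrix (Fin (d + 1)) (Fin (d + 1)) ℂ) (Δ η : ℝ)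
    (fhat : ℝ → ℂ)
    (horth : ∀ i j, star (ψ i) ⬝ᵥ ψ j = if i = j then (1 : ℂ) else 0)
    (hcomplete : ∑ i, ketbra ψ i = 1)
    (hgap : ∀ i : Fin (d + 1), i ≠ 0 → E 0 + Δ ≤ E i)
    (hΔ : 0 < Δ)
    (hcomm : A * B = B * A)
    (hfhi : ∀ ν ∈ bohrSet E, Δ ≤ ν → fhat (-ν) = 0)
    (hflo : ∀ ν ∈ bohrSet E, ν ≤ 0 → fhat (-ν) = 1)
    (hη : opNorm (B * sumFiltered ψ E A fhat - sumFiltered ψ E A fhat * B) ≤ η) :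
    ‖star (ψ 0) ⬝ᵥ (B * A).mulVec (ψ 0)
        - (star (ψ 0) ⬝ᵥ B.mulVec (ψ 0)) * (star (ψ 0) ⬝ᵥ A.mulVec (ψ 0))‖ ≤ η := by
  have hunit : star (ψ 0) ⬝ᵥ ψ 0 = 1 := by rw [horth, if_pos rfl]
  have hcommutator := dotProduct_commutator_mulVec
    (sumFiltered_mulVec_ground horth hgap hΔ.le hflo hfhi)
    (star_vecMul_sumFiltered_ground horth hgap hΔ.le hflo hcomplete) hcomm
  rw [← norm_neg, neg_sub, ← hcommutator]
  exact (norm_star_dotProduct_mulVec_le_opNorm _ hunit).trans hη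

/-- quasi-local filtering implies decay of correlation:
if `‖[B, Â_f]‖ ≤ η` then `|⟨ψ₀|BA|ψ₀⟩ − ⟨ψ₀|B|ψ₀⟩⟨ψ₀|A|ψ₀⟩| ≤ η`. -/
theorem quasilocal_filter_correlation_decay {d : ℕ} (ψ : Fin (d + 1) → Fin (d + 1) → ℂ)
    (E : Fin (d + 1) → ℝ) (H A B : Matrix (Fin (d + 1)) (Fin (d + 1)) ℂ) (Δ η : ℝ)
    (fhat : ℝ → ℂ)
    (horth : ∀ i j, star (ψ i) ⬝ᵥ ψ j = if i = j then (1 : ℂ) else 0)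
    (hcomplete : ∑ i, ketbra ψ i = 1)
    (hH : H = ∑ i, (E i : ℂ) • ketbra ψ i)
    (hgap : ∀ i : Fin (d + 1), i ≠ 0 → E 0 + Δ ≤ E i)
    (hΔ : 0 < Δ)
    (hA : A.IsHermitian) (hB : B.IsHermitian)
    (hAnorm : opNorm A ≤ 1) (hBnorm : opNorm B ≤ 1)
    (hcomm : A * B = B * A)
    (hfhi : ∀ ν ∈ bohrSet E, Δ ≤ ν → fhat (-ν) = 0)
    (hflo : ∀ ν ∈ bohrSet E, ν ≤ 0 → fhat (-ν) = 1)
    (hη : opNorm (B * sumFiltered ψ E A fhat - sumFiltered ψ E A fhat * B) ≤ η) :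
    ‖star (ψ 0) ⬝ᵥ (B * A).mulVec (ψ 0)
        - (star (ψ 0) ⬝ᵥ B.mulVec (ψ 0)) * (star (ψ 0) ⬝ᵥ A.mulVec (ψ 0))‖ ≤ η :=
  quasilocal_filter_correlation_decay_general ψ E A B Δ η fhat horth hcomplete hgap hΔ hcomm hfhi
    hflo hη

end
end
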